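/- Let L ≥ 2, k = (k_1,…,k_L) with all k_ℓ ≥ 1, s = (s_1,…,s_L) with all s_ℓ ≥ 1, and suppose s_i = 1 for some index 1 ≤ i ≤ L−1. Define the merged architecture k̃ := (k_1,…,k_{i−1}, k_i + k_{i+1} − 1, k_{i+2},…,k_L) and s̃ := (s_1,…,s_{i−1}, s_{i+1},…,s_L). Then F(k,s) = F(k̃,s̃). -/

import Mathlib

/-- All monomials of `P` involve only `x^s` and `y^s`. -/
def MonoS (s : ℕ) (P : MvPolynomial (Fin 2) ℂ) : Prop :=
  ∀ m ∈ P.support, s ∣ m 0 ∧ s ∣ m 1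

/-- `S ℓ = s_1 ⋯ s_{ℓ-1}` (0-indexed: `Sp s i = ∏_{j<i} s j`, so `Sp s 0 = 1`). -/
def Sp (s : ℕ → ℕ) (i : ℕ) : ℕ := ∏ j ∈ Finset.range i, s j

/-- `F(k,s)`: homogeneous polynomials of degree `k-1` admitting a factorization
`P = P_L ⋯ P_1`, where `P_ℓ` is homogeneous of degree `S_ℓ(k_ℓ-1)` with all monomials
in `x^{S_ℓ}, y^{S_ℓ}` (layers are 0-indexed here). -/
def Fset (L : ℕ) (k s : ℕ → ℕ) : Set (MvPolynomial (Fin 2) ℂ) :=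
  { P | ∃ Q : ℕ → MvPolynomial (Fin 2) ℂ, P = ∏ i ∈ Finset.range L, Q i ∧
      ∀ i < L, (Q i).IsHomogeneous (Sp s i * (k i - 1)) ∧ MonoS (Sp s i) (Q i) }

/-!
`Fset L k s` is the pointwise product over the layers `ℓ` of the sets of binary forms of degree
`S_ℓ (k_ℓ - 1)` in `x^{S_ℓ}, y^{S_ℓ}`. If `s_i = 1`, layers `i` and `i + 1` share the same `S`, and
merging them amounts to `layer S (S a) * layer S (S b) = layer S (S (a + b))`. For the nontrivial
inclusion write the form as `Q(x^S, y^S)`: `Q` is a binary form of degree `a + b`, hence over `ℂ` a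
product of linear forms (dehomogenize, factor, rehomogenize), so it splits into forms of degrees
`a` and `b`.
-/

open MvPolynomial Finset
open scoped Pointwise

namespace Polynomial

theorem exists_mul_eq_of_natDegree_le_add {K : Type*} [Field K] [IsAlgClosed K]
    (a b : ℕ) (p : K[X]) (h : p.natDegree ≤ a + b) :
    ∃ p₁ p₂ : K[X], p = p₁ * p₂ ∧ p₁.natDegree ≤ a ∧ p₂.natDegree ≤ b := by
  induction a generalizing p with
  | zero => exact ⟨1, p, (one_mul p).symm, by simp, by simpa using h⟩
  | succ a ih =>
    by_cases hp : p.natDegree ≤ b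
    · exact ⟨1, p, (one_mul p).symm, by simp, hp⟩
    obtain ⟨x, hx⟩ := IsAlgClosed.exists_root p (natDegree_pos_iff_degree_pos.mp (by omega)).ne'
    obtain ⟨q, rfl⟩ := dvd_iff_isRoot.mpr hx
    have hq : q ≠ 0 := by rintro rfl; simp at hp
    rw [natDegree_mul (X_sub_C_ne_zero x) hq, natDegree_X_sub_C] at h
    obtain ⟨q₁, q₂, rfl, h₁, h₂⟩ := ih q (by omega)
    refine ⟨(X - C x) * q₁, q₂, (mul_assoc _ _ _).symm, ?_, h₂⟩
    grw [natDegree_mul_le, natDegree_X_sub_C, h₁]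
    omega

end Polynomial

namespace MvPolynomial

theorem IsHomogeneous.natDegree_aeval_le {R : Type*} [CommSemiring R]
    {P : MvPolynomial (Fin 2) R} {n : ℕ} (hP : P.IsHomogeneous n) :
    (MvPolynomial.aeval ![(Polynomial.X : Polynomial R), 1] P).natDegree ≤ n := by
  rw [P.as_sum, map_sum]
  refine Polynomial.natDegree_sum_le_of_forall_le _ _ fun m hm => ?_
  have hm' := hP (mem_support_iff.mp hm)
  rw [Finsupp.weight_apply, Finsupp.sum_fintype _ _ (by simp), Fin.sum_univ_two] at hm'
  simp only [Pi.one_apply, smul_eq_mul, mul_one] at hm'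
  rw [aeval_monomial, Finsupp.prod_fintype _ _ (by simp), Fin.prod_univ_two]
  simp only [Matrix.cons_val_zero, Matrix.cons_val_one, one_pow, mul_one,
    ← Polynomial.C_eq_algebraMap]
  grw [Polynomial.natDegree_C_mul_le, Polynomial.natDegree_X_pow_le]
  omega

theorem IsHomogeneous.exists_mul_eq {K : Type*} [Field K] [IsAlgClosed K]
    {P : MvPolynomial (Fin 2) K} {a b : ℕ} (hP : P.IsHomogeneous (a + b)) :
    ∃ P₁ P₂ : MvPolynomial (Fin 2) K, P = P₁ * P₂ ∧ P₁.IsHomogeneous a ∧ P₂.IsHomogeneous b := by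
  obtain ⟨p₁, p₂, hp, h₁, h₂⟩ :=
    Polynomial.exists_mul_eq_of_natDegree_le_add a b _ hP.natDegree_aeval_le
  refine ⟨p₁.homogenize a, p₂.homogenize b, ?_, p₁.isHomogeneous_homogenize,
    p₂.isHomogeneous_homogenize⟩
  rw [← Polynomial.homogenize_mul _ _ h₁ h₂, ← hp,
    Polynomial.homogenize_eq_of_isHomogeneous hP rfl]

variable {σ R : Type*} [CommSemiring R] {p n : ℕ} {φ : MvPolynomial σ R}

theorem IsHomogeneous.expand (h : φ.IsHomogeneous n) (p : ℕ) :
    (expand p φ).IsHomogeneous (p * n) := by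
  classical
  intro m hm
  obtain ⟨d, hd, rfl⟩ := Finset.mem_image.mp (support_expand_subset φ (mem_support_iff.mpr hm))
  rw [map_nsmul, h (mem_support_iff.mp hd), smul_eq_mul]

theorem isHomogeneous_of_expand (hp : p ≠ 0) (h : (expand p φ).IsHomogeneous (p * n)) :
    φ.IsHomogeneous n := by
  intro d hd
  have := h (show (expand p φ).coeff (p • d) ≠ 0 by rwa [coeff_expand_smul _ hp])
  rw [map_nsmul, smul_eq_mul] at this
  exact Nat.eq_of_mul_eq_mul_left (Nat.pos_of_ne_zero hp) this

theorem exists_expand_eq (h : ∀ m ∈ φ.support, ∀ j, p ∣ m j) :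
    ∃ ψ, expand p ψ = φ := by
  refine ⟨∑ m ∈ φ.support, monomial (m.mapRange (· / p) (Nat.zero_div p)) (coeff m φ), ?_⟩
  conv_rhs => rw [φ.as_sum]
  rw [map_sum]
  refine Finset.sum_congr rfl fun m hm => ?_
  rw [expand_monomial]
  congr
  ext j
  simp [Nat.mul_div_cancel' (h m hm j)]

end MvPolynomial

theorem MonoS.mul {S : ℕ} {P Q : MvPolynomial (Fin 2) ℂ} (hP : MonoS S P) (hQ : MonoS S Q) :
    MonoS S (P * Q) := by
  classical
  intro m hm
  obtain ⟨a, ha, b, hb, rfl⟩ := Finset.mem_add.mp (support_mul P Q hm)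
  exact ⟨dvd_add (hP a ha).1 (hQ b hb).1, dvd_add (hP a ha).2 (hQ b hb).2⟩

theorem monoS_expand (S : ℕ) (ψ : MvPolynomial (Fin 2) ℂ) : MonoS S (expand S ψ) := by
  classical
  intro m hm
  obtain ⟨d, -, rfl⟩ := Finset.mem_image.mp (support_expand_subset ψ hm)
  simp

theorem MonoS.exists_expand_eq {S : ℕ} {P : MvPolynomial (Fin 2) ℂ} (h : MonoS S P) :
    ∃ ψ, expand S ψ = P :=
  MvPolynomial.exists_expand_eq fun m hm j => by fin_cases j; exacts [(h m hm).1, (h m hm).2]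

def layer (S d : ℕ) : Set (MvPolynomial (Fin 2) ℂ) := {Q | Q.IsHomogeneous d ∧ MonoS S Q}

theorem layer_mul_layer (S a b : ℕ) :
    layer S (S * a) * layer S (S * b) = layer S (S * (a + b)) := by
  ext P
  constructor
  · rintro ⟨P₁, ⟨h₁, m₁⟩, P₂, ⟨h₂, m₂⟩, rfl⟩
    exact ⟨mul_add S a b ▸ h₁.mul h₂, m₁.mul m₂⟩
  rintro ⟨hP, hM⟩
  rcases eq_or_ne S 0 with rfl | hS
  · have h₁ : (1 : MvPolynomial (Fin 2) ℂ) ∈ layer 0 (0 * b) :=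
      ⟨by simpa using isHomogeneous_one (Fin 2) ℂ, by simpa using monoS_expand 0 1⟩
    exact ⟨P, ⟨by simpa using hP, hM⟩, 1, h₁, mul_one P⟩
  obtain ⟨ψ, rfl⟩ := hM.exists_expand_eq
  obtain ⟨ψ₁, ψ₂, rfl, h₁, h₂⟩ := (isHomogeneous_of_expand hS hP).exists_mul_eq
  exact ⟨expand S ψ₁, ⟨h₁.expand S, monoS_expand S ψ₁⟩,
    expand S ψ₂, ⟨h₂.expand S, monoS_expand S ψ₂⟩, (map_mul _ _ _).symm⟩

theorem Fset_eq_prod_layer (L : ℕ) (k s : ℕ → ℕ) :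
    Fset L k s = ∏ j ∈ range L, layer (Sp s j) (Sp s j * (k j - 1)) := by
  ext P
  rw [Set.mem_finsetProd]
  constructor
  · rintro ⟨Q, rfl, hQ⟩
    exact ⟨Q, fun hj => hQ _ (mem_range.mp hj), rfl⟩
  · rintro ⟨Q, hQ, rfl⟩
    exact ⟨Q, rfl, fun j hj => hQ (mem_range.mpr hj)⟩

theorem Finset.prod_range_succ_eq_prod_merge {M : Type*} [CommMonoid M] (f : ℕ → M) {i n : ℕ}
    (hi : i < n) : ∏ j ∈ range (n + 1), f j =
      ∏ j ∈ range n, if j < i then f j else if j = i then f i * f (i + 1) else f (j + 1) := by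
  induction n with
  | zero => omega
  | succ n ih =>
    rw [prod_range_succ f (n + 1)]
    rcases Nat.lt_succ_iff_lt_or_eq.mp hi with hi | rfl
    · rw [ih hi, prod_range_succ _ n, if_neg (by omega), if_neg (by omega)]
    · rw [prod_range_succ, prod_range_succ, if_neg (lt_irrefl i), if_pos rfl, mul_assoc]
      congr 1
      exact prod_congr rfl fun j hj => (if_pos (mem_range.mp hj)).symm

theorem Sp_succ (s : ℕ → ℕ) (j : ℕ) : Sp s (j + 1) = Sp s j * s j :=
  prod_range_succ s j

theorem Sp_eq_of_le {s st : ℕ → ℕ} {i j : ℕ}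
    (hst : ∀ j, st j = if j < i then s j else s (j + 1)) (hj : j ≤ i) : Sp st j = Sp s j :=
  prod_congr rfl fun m hm => by rw [hst, if_pos (lt_of_lt_of_le (mem_range.mp hm) hj)]

theorem Sp_eq_succ_of_le {s st : ℕ → ℕ} {i j : ℕ}
    (hst : ∀ j, st j = if j < i then s j else s (j + 1)) (hsi : s i = 1) (hj : i ≤ j) :
    Sp st j = Sp s (j + 1) := by
  induction j, hj using Nat.le_induction with
  | base => rw [Sp_eq_of_le hst le_rfl, Sp_succ, hsi, mul_one]
  | succ j hj ih => rw [Sp_succ, ih, hst, if_neg (by omega), Sp_succ s (j + 1)]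

theorem stmt_10_general (L : ℕ) (k s : ℕ → ℕ)
    (hk : ∀ j < L, 1 ≤ k j)
    (i : ℕ) (hi : i + 1 < L) (hsi : s i = 1)
    (kt st : ℕ → ℕ)
    (hkt : ∀ j, kt j = if j < i then k j else if j = i then k i + k (i + 1) - 1 else k (j + 1))
    (hst : ∀ j, st j = if j < i then s j else s (j + 1)) :
    Fset L k s = Fset (L - 1) kt st := by
  obtain ⟨n, rfl⟩ : ∃ n, L = n + 1 := ⟨L - 1, by omega⟩
  rw [Fset_eq_prod_layer, Fset_eq_prod_layer, Nat.add_sub_cancel,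
    prod_range_succ_eq_prod_merge _ (by omega : i < n)]
  refine prod_congr rfl fun j _ => ?_
  rcases lt_trichotomy j i with hj | rfl | hj
  · rw [if_pos hj, hkt, if_pos hj, Sp_eq_of_le hst hj.le]
  · have hdeg : kt j - 1 = (k j - 1) + (k (j + 1) - 1) := by
      have := hk j (by omega)
      have := hk (j + 1) hi
      rw [hkt, if_neg (lt_irrefl j), if_pos rfl]
      omega
    rw [if_neg (lt_irrefl j), if_pos rfl, Sp_succ, hsi, mul_one, layer_mul_layer, hdeg,
      Sp_eq_of_le hst le_rfl]
  · rw [if_neg (by omega), if_neg (by omega), hkt, if_neg (by omega), if_neg (by omega),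
      Sp_eq_succ_of_le hst hsi hj.le]

/-- Merging consecutive layers `i` and `i+1` (0-indexed) when `s i = 1`:
`k̃ = (k_1,…,k_{i-1}, k_i + k_{i+1} - 1, k_{i+2},…,k_L)` and
`s̃ = (s_1,…,s_{i-1}, s_{i+1},…,s_L)` give the same set `F`. -/
theorem stmt_10 (L : ℕ) (hL : 2 ≤ L) (k s : ℕ → ℕ)
    (hk : ∀ j < L, 1 ≤ k j) (hs : ∀ j < L, 1 ≤ s j)
    (i : ℕ) (hi : i + 1 < L) (hsi : s i = 1)
    (kt st : ℕ → ℕ)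
    (hkt : ∀ j, kt j = if j < i then k j else if j = i then k i + k (i + 1) - 1 else k (j + 1))
    (hst : ∀ j, st j = if j < i then s j else s (j + 1)) :
    Fset L k s = Fset (L - 1) kt st :=
  stmt_10_general L k s hk i hi hsi kt st hkt hst
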